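/- arXiv:1903.00681 — 3 statements merged into one kernel-verified Lean document; each statement's English description precedes it below -/
import Mathlib

section
/- Let 1 ≤ p ≤ q ≤ ∞, let n ≥ 1 and let 0 = x_0 ≤ x_1 ≤ … ≤ x_n ≤ x_{n+1} = 1. Set ℓ = max_{0 ≤ i ≤ n} (x_{i+1} − x_i). Then every f ∈ W^1_p([0,1]) with f(x_i) = 0 for all 1 ≤ i ≤ n satisfies ‖f‖_{L_q([0,1])} ≤ ℓ^{1 − 1/p + 1/q} · ‖f′‖_{L_p([0,1])}. -/
open MeasureTheory Set
open scoped ENNReal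

/-- Lebesgue measure restricted to the unit interval. -/
noncomputable def mu01 : Measure ℝ := volume.restrict (Set.Icc (0:ℝ) 1)

/-- `f` is in `W^1_p([0,1])` (as a function with a.e. derivative `g`):
`f` is absolutely continuous on `[0,1]`, given as the integral of `g`. -/
def IsW11 (f g : ℝ → ℝ) : Prop :=
  IntervalIntegrable g volume 0 1 ∧
    ∀ x ∈ Set.Icc (0:ℝ) 1, f x = f 0 + ∫ t in (0:ℝ)..x, g t

/-- The `W^1_p([0,1])` norm of `f` with derivative `g`:
`(‖f‖_p^p + ‖g‖_p^p)^(1/p)` for finite `p`, and `max (‖f‖_∞, ‖g‖_∞)` for `p = ∞`. -/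
noncomputable def sobNorm (p : ℝ≥0∞) (f g : ℝ → ℝ) : ℝ≥0∞ :=
  if p = ∞ then max (eLpNorm f ∞ mu01) (eLpNorm g ∞ mu01)
  else (eLpNorm f p mu01 ^ p.toReal + eLpNorm g p mu01 ^ p.toReal) ^ (1 / p.toReal)

/-- The radius of the standard information `f ↦ (f (x 1), …, f (x n))` for
`L_q`-approximation on the unit ball of `W^1_p([0,1])`:
`sup { ‖f‖_q : ‖f‖_{W^1_p} ≤ 1, f (x i) = 0 for 1 ≤ i ≤ n }`. -/
noncomputable def sobRadius (p q : ℝ≥0∞) (n : ℕ) (x : ℕ → ℝ) : ℝ≥0∞ :=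
  ⨆ f : ℝ → ℝ, ⨆ g : ℝ → ℝ,
    ⨆ (_ : IsW11 f g ∧ sobNorm p f g ≤ 1 ∧ ∀ i, 1 ≤ i → i ≤ n → f (x i) = 0),
      eLpNorm f q mu01

/-!
On each piece `[x i, x (i + 1)]` the function `f` vanishes at a node, so there
`|f| ≤ ∫ |g| ≤ ℓ ^ (1 - 1/p) ‖g‖_p` by Hölder, and integrating this pointwise bound gives
`‖f‖_q ≤ ℓ ^ (1 - 1/p + 1/q) ‖g‖_p` on the piece. Since `p ≤ q`, these local estimates glue:
`(∑ aᵢ ^ q) ^ (1/q) ≤ (∑ aᵢ ^ p) ^ (1/p)`.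
-/

lemma ENNReal.toReal_one_div_le_one {p : ℝ≥0∞} (hp : 1 ≤ p) : (1 / p).toReal ≤ 1 :=
  ENNReal.toReal_le_of_le_ofReal zero_le_one <|
    ENNReal.ofReal_one ▸ ENNReal.div_le_of_le_mul (by simpa using hp)

namespace MeasureTheory

variable {α E F : Type*} {m : MeasurableSpace α} [NormedAddCommGroup E] [NormedAddCommGroup F]
  {μ ν : Measure α} {f : α → E} {g : α → F}

lemma eLpNorm_add_measure_rpow {q : ℝ≥0∞} (hq0 : q ≠ 0) (hq : q ≠ ∞) (f : α → E) :
    eLpNorm f q (μ + ν) ^ q.toReal = eLpNorm f q μ ^ q.toReal + eLpNorm f q ν ^ q.toReal := by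
  have hq' : 0 < q.toReal := ENNReal.toReal_pos hq0 hq
  simp only [eLpNorm_eq_eLpNorm' hq0 hq, ← lintegral_rpow_enorm_eq_rpow_eLpNorm' hq',
    lintegral_add_measure]

lemma eLpNorm_add_measure_le_mul {p q : ℝ≥0∞} (hp : p ≠ 0) (hpq : p ≤ q) {C : ℝ≥0∞}
    (hμ : eLpNorm f q μ ≤ C * eLpNorm g p μ) (hν : eLpNorm f q ν ≤ C * eLpNorm g p ν) :
    eLpNorm f q (μ + ν) ≤ C * eLpNorm g p (μ + ν) := by
  rcases eq_or_ne q ∞ with rfl | hq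
  · rw [eLpNorm_exponent_top]
    refine eLpNormEssSup_le_of_ae_enorm_bound (ae_add_measure_iff.2 ⟨?_, ?_⟩)
    · filter_upwards [enorm_ae_le_eLpNormEssSup f μ] with y hy
      rw [← eLpNorm_exponent_top] at hy
      exact hy.trans (hμ.trans (by gcongr C * ?_; exact eLpNorm_le_add_measure_right g μ ν))
    · filter_upwards [enorm_ae_le_eLpNormEssSup f ν] with y hy
      rw [← eLpNorm_exponent_top] at hy
      exact hy.trans (hν.trans (by gcongr C * ?_; exact eLpNorm_le_add_measure_left g μ ν))
  have hp' : p ≠ ∞ := ne_top_of_le_ne_top hq hpq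
  have hq0 : q ≠ 0 := (pos_of_ne_zero hp |>.trans_le hpq).ne'
  have hpr : 0 < p.toReal := ENNReal.toReal_pos hp hp'
  have hqr : 0 < q.toReal := ENNReal.toReal_pos hq0 hq
  set A := eLpNorm g p μ
  set B := eLpNorm g p ν
  have hAB : A ^ q.toReal + B ^ q.toReal ≤ eLpNorm g p (μ + ν) ^ q.toReal := by
    calc A ^ q.toReal + B ^ q.toReal
        = ((A ^ q.toReal + B ^ q.toReal) ^ (1 / q.toReal)) ^ q.toReal := by
          rw [← ENNReal.rpow_mul, one_div_mul_cancel hqr.ne', ENNReal.rpow_one]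
      _ ≤ ((A ^ p.toReal + B ^ p.toReal) ^ (1 / p.toReal)) ^ q.toReal := by
          gcongr; exact ENNReal.rpow_add_rpow_le A B hpr (ENNReal.toReal_mono hq hpq)
      _ = eLpNorm g p (μ + ν) ^ q.toReal := by
          rw [← eLpNorm_add_measure_rpow hp hp', ← ENNReal.rpow_mul, ← ENNReal.rpow_mul,
            ← mul_assoc, mul_one_div_cancel hpr.ne', one_mul]
  rw [← ENNReal.rpow_le_rpow_iff hqr]
  calc eLpNorm f q (μ + ν) ^ q.toReal
      = eLpNorm f q μ ^ q.toReal + eLpNorm f q ν ^ q.toReal := eLpNorm_add_measure_rpow hq0 hq f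
    _ ≤ (C * A) ^ q.toReal + (C * B) ^ q.toReal := by gcongr
    _ = C ^ q.toReal * (A ^ q.toReal + B ^ q.toReal) := by
        rw [ENNReal.mul_rpow_of_nonneg _ _ hqr.le, ENNReal.mul_rpow_of_nonneg _ _ hqr.le, mul_add]
    _ ≤ (C * eLpNorm g p (μ + ν)) ^ q.toReal := by
        rw [ENNReal.mul_rpow_of_nonneg _ _ hqr.le]; gcongr

lemma eLpNorm_finset_sum_measure_le_mul {ι : Type*} (s : Finset ι) (μ : ι → Measure α)
    {p q : ℝ≥0∞} (hp : p ≠ 0) (hpq : p ≤ q) {C : ℝ≥0∞}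
    (h : ∀ i ∈ s, eLpNorm f q (μ i) ≤ C * eLpNorm g p (μ i)) :
    eLpNorm f q (∑ i ∈ s, μ i) ≤ C * eLpNorm g p (∑ i ∈ s, μ i) :=
  Finset.sum_induction μ (fun ν => eLpNorm f q ν ≤ C * eLpNorm g p ν)
    (fun _ _ => eLpNorm_add_measure_le_mul hp hpq) (by simp) h

lemma eLpNorm_le_measure_rpow_mul_of_enorm_le_lintegral {p : ℝ≥0∞} (q : ℝ≥0∞) (hp : 1 ≤ p)
    (hg : AEStronglyMeasurable g μ) (hf : ∀ᵐ y ∂μ, ‖f y‖ₑ ≤ ∫⁻ t, ‖g t‖ₑ ∂μ) :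
    eLpNorm f q μ ≤ μ univ ^ (1 - (1 / p).toReal + (1 / q).toReal) * eLpNorm g p μ := by
  have hHolder := eLpNorm_le_eLpNorm_mul_rpow_measure_univ hp hg
  rw [eLpNorm_one_eq_lintegral_enorm, ENNReal.toReal_one, div_one, one_div p.toReal,
    ← ENNReal.toReal_inv, ← one_div] at hHolder
  calc eLpNorm f q μ ≤ (∫⁻ t, ‖g t‖ₑ ∂μ) * μ univ ^ (1 / q).toReal := by
        simpa [ENNReal.toReal_inv] using eLpNorm_le_of_ae_enorm_bound (p := q) hf
    _ ≤ eLpNorm g p μ * μ univ ^ (1 - (1 / p).toReal) * μ univ ^ (1 / q).toReal := by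
        gcongr
    _ = μ univ ^ (1 - (1 / p).toReal + (1 / q).toReal) * eLpNorm g p μ := by
        rw [ENNReal.rpow_add_of_nonneg _ _ (sub_nonneg.2 (ENNReal.toReal_one_div_le_one hp))
          ENNReal.toReal_nonneg]
        ring

end MeasureTheory

lemma MeasureTheory.Measure.restrict_Ioc_eq_sum_restrict_Ioc {α : Type*} [LinearOrder α]
    [TopologicalSpace α] [OrderClosedTopology α] [MeasurableSpace α] [OpensMeasurableSpace α]
    (μ : Measure α) {x : ℕ → α} {m : ℕ} (hx : MonotoneOn x (Iic m)) :
    μ.restrict (Ioc (x 0) (x m)) =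
      ∑ i ∈ Finset.range m, μ.restrict (Ioc (x i) (x (i + 1))) := by
  induction m with
  | zero => simp
  | succ m ih =>
    have hm : x m ≤ x (m + 1) := hx (by simp) (by simp) (by omega)
    rw [Finset.sum_range_succ, ← ih (hx.mono (Iic_subset_Iic.2 m.le_succ)),
      ← Measure.restrict_union (Ioc_disjoint_Ioc_of_le le_rfl) measurableSet_Ioc,
      Ioc_union_Ioc_eq_Ioc (hx (by simp) (by simp) (Nat.zero_le m)) hm]

lemma enorm_intervalIntegral_le_lintegral_Ioc {g : ℝ → ℝ} {a b y z : ℝ}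
    (hz : z ∈ Icc a b) (hy : y ∈ Icc a b) :
    ‖∫ t in z..y, g t‖ₑ ≤ ∫⁻ t in Ioc a b, ‖g t‖ₑ := by
  rw [← ofReal_norm, intervalIntegral.norm_intervalIntegral_eq, ofReal_norm]
  exact (enorm_integral_le_lintegral_enorm _).trans <| lintegral_mono_set <|
    Ioc_subset_Ioc (le_min hz.1 hy.1) (max_le hz.2 hy.2)

namespace IsW11

variable {f g : ℝ → ℝ}

lemma sub_eq_intervalIntegral (hfg : IsW11 f g) {y z : ℝ} (hy : y ∈ Icc (0 : ℝ) 1)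
    (hz : z ∈ Icc (0 : ℝ) 1) : f y - f z = ∫ t in z..y, g t := by
  have hint : ∀ c ∈ Icc (0 : ℝ) 1, IntervalIntegrable g volume 0 c := fun c hc =>
    hfg.1.mono_set (uIcc_subset_uIcc left_mem_uIcc (mem_uIcc_of_le hc.1 hc.2))
  rw [hfg.2 y hy, hfg.2 z hz, add_sub_add_left_eq_sub,
    intervalIntegral.integral_interval_sub_left (hint y hy) (hint z hz)]

lemma enorm_le_lintegral_Ioc (hfg : IsW11 f g) {a b y z : ℝ} (ha : 0 ≤ a) (hb : b ≤ 1)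
    (hz : z ∈ Icc a b) (hfz : f z = 0) (hy : y ∈ Icc a b) :
    ‖f y‖ₑ ≤ ∫⁻ t in Ioc a b, ‖g t‖ₑ := by
  have hab : Icc a b ⊆ Icc 0 1 := Icc_subset_Icc ha hb
  rw [← sub_zero (f y), ← hfz, hfg.sub_eq_intervalIntegral (hab hy) (hab hz)]
  exact enorm_intervalIntegral_le_lintegral_Ioc hz hy

lemma eLpNorm_restrict_Ioc_le (hfg : IsW11 f g) {p : ℝ≥0∞} (q : ℝ≥0∞) (hp : 1 ≤ p)
    {a b z : ℝ} (ha : 0 ≤ a) (hb : b ≤ 1) (hz : z ∈ Icc a b) (hfz : f z = 0) :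
    eLpNorm f q (volume.restrict (Ioc a b)) ≤
      volume (Ioc a b) ^ (1 - (1 / p).toReal + (1 / q).toReal) *
        eLpNorm g p (volume.restrict (Ioc a b)) := by
  have hg : AEStronglyMeasurable g (volume.restrict (Ioc a b)) :=
    (hfg.1.1.mono_set (Ioc_subset_Ioc ha hb)).aestronglyMeasurable
  have hf : ∀ᵐ y ∂volume.restrict (Ioc a b), ‖f y‖ₑ ≤ ∫⁻ t in Ioc a b, ‖g t‖ₑ :=
    ae_restrict_of_forall_mem measurableSet_Ioc fun y hy =>
      hfg.enorm_le_lintegral_Ioc ha hb hz hfz (Ioc_subset_Icc_self hy)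
  simpa only [Measure.restrict_apply_univ] using
    eLpNorm_le_measure_rpow_mul_of_enorm_le_lintegral q hp hg hf

end IsW11

theorem stmt2 (p q : ℝ≥0∞) (hp : 1 ≤ p) (hpq : p ≤ q)
    (n : ℕ) (hn : 1 ≤ n) (x : ℕ → ℝ)
    (hx0 : x 0 = 0) (hx1 : x (n+1) = 1) (hmono : ∀ i ≤ n, x i ≤ x (i+1))
    (f g : ℝ → ℝ) (hfg : IsW11 f g)
    (hzero : ∀ i, 1 ≤ i → i ≤ n → f (x i) = 0)
    (ℓ : ℝ)
    (hℓ : ℓ = (Finset.range (n+1)).sup'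
        (Finset.nonempty_range_iff.mpr (Nat.succ_ne_zero n))
        (fun i => x (i+1) - x i)) :
    eLpNorm f q mu01
      ≤ ENNReal.ofReal (ℓ ^ (1 - (1/p).toReal + (1/q).toReal)) * eLpNorm g p mu01 := by
  have hx : MonotoneOn x (Iic (n + 1)) :=
    monotoneOn_of_le_add_one ordConnected_Iic fun i _ _ hi => hmono i (by simpa using hi)
  have hmu : mu01 = ∑ i ∈ Finset.range (n + 1), volume.restrict (Ioc (x i) (x (i + 1))) := by
    rw [mu01, ← Measure.restrict_congr_set Ioc_ae_eq_Icc, ← hx0, ← hx1]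
    exact Measure.restrict_Ioc_eq_sum_restrict_Ioc volume hx
  rw [hmu]
  refine eLpNorm_finset_sum_measure_le_mul _ _ (one_pos.trans_le hp).ne' hpq fun i hi => ?_
  have hi : i ≤ n := Nat.lt_succ_iff.mp (Finset.mem_range.mp hi)
  -- every piece `[x i, x (i + 1)]` contains a node: `x 1` for the first, `x i` for the others
  have hnode : x (max 1 i) ∈ Icc (x i) (x (i + 1)) :=
    ⟨hx (by omega : i ≤ n + 1) (by omega : max 1 i ≤ n + 1) (le_max_right 1 i),
      hx (by omega : max 1 i ≤ n + 1) (by omega : i + 1 ≤ n + 1) (by omega)⟩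
  have hxi : 0 ≤ x i := hx0 ▸ hx (by simp) (by omega : i ≤ n + 1) (Nat.zero_le i)
  have hxi1 : x (i + 1) ≤ 1 := hx1 ▸ hx (by omega : i + 1 ≤ n + 1) (by simp) (by omega)
  have hlen : x (i + 1) - x i ≤ ℓ :=
    hℓ ▸ Finset.le_sup' (fun i => x (i + 1) - x i) (by simpa using hi)
  have hexp : 0 ≤ 1 - (1 / p).toReal + (1 / q).toReal := by
    linarith [ENNReal.toReal_one_div_le_one hp, (1 / q).toReal_nonneg]
  refine (hfg.eLpNorm_restrict_Ioc_le q hp hxi hxi1 hnode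
    (hzero _ (le_max_left 1 i) (by omega))).trans ?_
  rw [Real.volume_Ioc,
    ← ENNReal.ofReal_rpow_of_nonneg (by linarith [hnode.1.trans hnode.2]) hexp]
  gcongr
end

section
/- Let d ≥ 1 and 1 ≤ q < ∞. Let X_1,…,X_n be independent random points uniformly distributed in [0,1]^d and P_n = {X_1,…,X_n}. Then lim_{n → ∞} n^{1/d} · ( E[ ∫_{[0,1]^d} dist(x, P_n)^q dx ] )^{1/q} = (1/2) · Γ(q/d + 1)^{1/q}, where Γ denotes the Gamma function. -/
open MeasureTheory Set
open scoped ENNReal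

/-- The maximum metric on the `d`-dimensional torus:
`dist(x,y) = min_{k ∈ ℤ^d} ‖x + k − y‖_∞` for `x, y ∈ [0,1]^d`. -/
noncomputable def tdist (d : ℕ) (x y : Fin d → ℝ) : ℝ :=
  ⨅ k : Fin d → ℤ, ‖(x + fun i => (k i : ℝ)) - y‖

/-- The unit cube `[0,1]^d`. -/
def unitCube (d : ℕ) : Set (Fin d → ℝ) := Set.Icc 0 1

/-- The class `F_d` of functions `f : [0,1]^d → ℝ` that are `1`-Lipschitz with respect
to the torus metric `tdist`. -/
def LipClass (d : ℕ) : Set ((Fin d → ℝ) → ℝ) :=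
  {f | ∀ x ∈ unitCube d, ∀ y ∈ unitCube d, |f x - f y| ≤ tdist d x y}

/-- Lebesgue measure restricted to the unit cube `[0,1]^d`. -/
noncomputable def cubeMeasure (d : ℕ) : Measure (Fin d → ℝ) :=
  volume.restrict (unitCube d)

/-!
On the torus `(ℝ/ℤ)^d` the metric `tdist` is the sup distance and the uniform measure on the
cube is Haar measure, so a `tdist`-ball of radius `t ≤ 1/2` has volume `(2t)^d`. Hence, for
every `x`, the distance from `x` to `P_n` exceeds `t` with probability `(1 - (2t)^d)^n`,
independently of `x`. Fubini and the layer-cake formula turn the expected `q`-th moment into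
`∫₀^∞ (1 - min 1 (2 s^{1/q})^d)^n ds`, and the substitution `s = 2^{-q} u^{q/d}` turns this
into `2^{-q} (q/d) B(q/d, n+1)`. Euler's limit `n^a B(a, n+1) → Γ(a)` concludes.
-/

open Filter Topology

lemma measureReal_pi_lt_iInf {α ι : Type*} [MeasurableSpace α] [Fintype ι] [Nonempty ι]
    (μ : Measure α) [SigmaFinite μ] (f : α → ℝ) (t : ℝ) :
    (Measure.pi fun _ : ι => μ).real {ω | t < ⨅ i, f (ω i)} =
      μ.real {y | t < f y} ^ Fintype.card ι := by
  have hset : {ω : ι → α | t < ⨅ i, f (ω i)} = univ.pi fun _ => {y | t < f y} := by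
    ext ω
    obtain ⟨i₀, hi₀⟩ := exists_eq_ciInf_of_finite (f := fun i => f (ω i))
    simp only [mem_ofPred_eq, mem_univ_pi, ← hi₀]
    exact ⟨fun h i => h.trans_le (hi₀ ▸ ciInf_le (finite_range _).bddBelow i),
      fun h => h i₀⟩
  rw [hset, measureReal_def, Measure.pi_pi, ENNReal.toReal_prod, Finset.prod_const,
    Finset.card_univ, measureReal_def]

lemma integral_integral_eq_integral_tail {α β : Type*} [MeasurableSpace α] [MeasurableSpace β]
    {μ : Measure α} {ν : Measure β} [IsProbabilityMeasure μ] [IsFiniteMeasure ν]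
    {F : α → β → ℝ} (hF : Measurable (Function.uncurry F)) {C : ℝ}
    (hF0 : ∀ x ω, 0 ≤ F x ω) (hFC : ∀ x ω, F x ω ≤ C)
    {g : ℝ → ℝ} (hg : ∀ x, ∀ t ∈ Ioi 0, ν.real {ω | t < F x ω} = g t) :
    ∫ ω, ∫ x, F x ω ∂μ ∂ν = ∫ t in Ioi 0, g t := by
  have hbound : ∀ p, ‖Function.uncurry F p‖ ≤ C := fun p =>
    (Real.norm_of_nonneg (hF0 p.1 p.2)).trans_le (hFC p.1 p.2)
  rw [← integral_integral_swap
    (Integrable.of_bound hF.aestronglyMeasurable C (ae_of_all _ hbound))]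
  have hinner : ∀ x, ∫ ω, F x ω ∂ν = ∫ t in Ioi 0, g t := fun x => by
    have hint : Integrable (F x) ν :=
      Integrable.of_bound (hF.comp measurable_prodMk_left).aestronglyMeasurable C
        (ae_of_all _ fun ω => hbound (x, ω))
    rw [hint.integral_eq_integral_meas_lt (ae_of_all _ (hF0 x))]
    exact setIntegral_congr_fun measurableSet_Ioi (hg x)
  simp [hinner]

lemma Real.GammaSeq_eq_rpow_mul_integral {a : ℝ} (ha : 0 < a) (n : ℕ) :
    Real.GammaSeq a n = n ^ a * ∫ x in (0 : ℝ)..1, x ^ (a - 1) * (1 - x) ^ n := by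
  apply Complex.ofReal_injective
  have hGammaSeq : (Real.GammaSeq a n : ℂ) = Complex.GammaSeq a n := by
    simp [Real.GammaSeq, Complex.GammaSeq, Complex.ofReal_cpow n.cast_nonneg]
  have hbeta : Complex.betaIntegral a (n + 1) =
      ↑(∫ x in (0 : ℝ)..1, x ^ (a - 1) * (1 - x) ^ n) := by
    rw [Complex.betaIntegral, ← intervalIntegral.integral_ofReal]
    refine intervalIntegral.integral_congr fun x hx => ?_
    rw [uIcc_of_le zero_le_one] at hx
    simp [Complex.ofReal_cpow hx.1]
  rw [hGammaSeq, Complex.GammaSeq_eq_betaIntegral_of_re_pos (by simpa using ha), hbeta]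
  push_cast
  rw [Complex.ofReal_cpow n.cast_nonneg, Complex.ofReal_natCast]

lemma min_one_rpow_inv_pow {x : ℝ} (hx : 0 ≤ x) {d : ℕ} (hd : d ≠ 0) :
    min 1 (x ^ (d : ℝ)⁻¹) ^ d = min 1 x := by
  rcases le_total x 1 with h | h
  · rw [min_eq_right (Real.rpow_le_one hx h (by positivity)), min_eq_right h,
      Real.rpow_inv_natCast_pow hx hd]
  · rw [min_eq_left (Real.one_le_rpow h (by positivity)), min_eq_left h, one_pow]

lemma integral_tail_eq_beta {d n : ℕ} (hd : d ≠ 0) (hn : n ≠ 0) {q : ℝ} (hq : 0 < q) :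
    ∫ s in Ioi (0 : ℝ), (1 - min 1 (2 * s ^ q⁻¹) ^ d) ^ n =
      2 ^ (-q) * (q / d) * ∫ x in (0 : ℝ)..1, x ^ (q / d - 1) * (1 - x) ^ n := by
  set g : ℝ → ℝ := fun s => (1 - min 1 (2 * s ^ q⁻¹) ^ d) ^ n
  set c : ℝ := 2 ^ (-q)
  set a : ℝ := q / d
  have hc : 0 < c := by positivity
  have ha : 0 < a := div_pos hq (Nat.cast_pos.2 (Nat.pos_of_ne_zero hd))
  -- `s = c * x ^ a` turns `(2 * s ^ q⁻¹) ^ d` into `x`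
  have hsubst : ∀ x ∈ Ioi (0 : ℝ), g (c * x ^ a) = (1 - min 1 x) ^ n := by
    intro x hx
    have h2 : 2 * (c * x ^ a) ^ q⁻¹ = x ^ (d : ℝ)⁻¹ := by
      rw [Real.mul_rpow hc.le (Real.rpow_nonneg hx.le a), ← Real.rpow_mul two_pos.le,
        ← Real.rpow_mul hx.le, neg_mul, mul_inv_cancel₀ hq.ne', Real.rpow_neg_one,
        ← mul_assoc, mul_inv_cancel₀ two_ne_zero, one_mul]
      congr 1
      simp only [a]
      field_simp
    simp only [g, h2, min_one_rpow_inv_pow hx.le hd]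
  have hcut : ∀ x ∈ Ioi (0 : ℝ) \ Ioc 0 1, x ^ (a - 1) * (1 - min 1 x) ^ n = 0 := by
    intro x hx
    have : 1 < x := by simpa using hx
    simp [min_eq_left this.le, zero_pow hn]
  calc ∫ s in Ioi 0, g s = c * ∫ u in Ioi 0, g (c * u) := by
        rw [← smul_eq_mul, integral_comp_mul_left_Ioi' g 0 hc, mul_zero]
    _ = c * ∫ x in Ioi 0, a * (x ^ (a - 1) * (1 - min 1 x) ^ n) := by
        rw [← integral_comp_rpow_Ioi_of_pos ha]
        congr 1
        refine setIntegral_congr_fun measurableSet_Ioi fun x hx => ?_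
        rw [smul_eq_mul, hsubst x hx, mul_assoc]
    _ = c * (a * ∫ x in Ioc 0 1, x ^ (a - 1) * (1 - x) ^ n) := by
        rw [integral_const_mul, setIntegral_eq_of_subset_of_forall_sdiff_eq_zero measurableSet_Ioi
          Ioc_subset_Ioi_self hcut]
        congr 2
        refine setIntegral_congr_fun measurableSet_Ioc fun x hx => ?_
        rw [min_eq_right hx.2]
    _ = c * a * ∫ x in (0 : ℝ)..1, x ^ (a - 1) * (1 - x) ^ n := by
        rw [intervalIntegral.integral_of_le zero_le_one, mul_assoc]

section Torus

variable {ι : Type*}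

def toTorus (x : ι → ℝ) : ι → UnitAddCircle := fun i => x i

lemma continuous_toTorus : Continuous (toTorus : (ι → ℝ) → ι → UnitAddCircle) :=
  continuous_pi fun i => (AddCircle.continuous_mk' 1).comp (continuous_apply i)

lemma dist_toTorus_le_norm [Fintype ι] (x y : ι → ℝ) (k : ι → ℤ) :
    dist (toTorus x) (toTorus y) ≤ ‖(x + fun i => (k i : ℝ)) - y‖ := by
  refine (dist_pi_le_iff (norm_nonneg _)).2 fun i => ?_
  have hk : ((x i + k i - y i : ℝ) : UnitAddCircle) = toTorus x i - toTorus y i := by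
    simp [toTorus]
  calc dist (toTorus x i) (toTorus y i) = ‖((x i + k i - y i : ℝ) : UnitAddCircle)‖ := by
        rw [hk, dist_eq_norm]
    _ ≤ ‖x i + k i - y i‖ := QuotientAddGroup.norm_mk_le_norm
    _ ≤ ‖(x + fun i => (k i : ℝ)) - y‖ := norm_le_pi_norm ((x + fun i => (k i : ℝ)) - y) i

lemma dist_toTorus_le_half [Fintype ι] (x y : ι → ℝ) :
    dist (toTorus x) (toTorus y) ≤ 1 / 2 :=
  (dist_pi_le_iff (by norm_num)).2 fun i => by
    simpa [dist_eq_norm] using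
      AddCircle.norm_le_half_period (p := (1 : ℝ)) (x := toTorus x i - toTorus y i) one_ne_zero

lemma measurePreserving_toTorus [Fintype ι] :
    MeasurePreserving (toTorus : (ι → ℝ) → ι → UnitAddCircle) (volume.restrict (Icc 0 1))
      volume := by
  have hIcc : volume.restrict (Icc (0 : ι → ℝ) 1) =
      Measure.pi fun _ => volume.restrict (Ioc (0 : ℝ) (0 + 1)) := by
    rw [← pi_univ_Icc, volume_pi, Measure.restrict_pi_pi, zero_add]
    simp only [Pi.zero_apply, Pi.one_apply, Measure.restrict_congr_set Ioc_ae_eq_Icc]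
  rw [hIcc]
  exact measurePreserving_pi _ _ fun _ => AddCircle.measurePreserving_mk 1 0

lemma volume_closedBall_pi_unitAddCircle [Fintype ι] (z : ι → UnitAddCircle) {t : ℝ}
    (ht : 0 ≤ t) :
    volume (Metric.closedBall z t) = ENNReal.ofReal (min 1 (2 * t)) ^ Fintype.card ι := by
  rw [closedBall_pi z ht, volume_pi, Measure.pi_pi]
  simp [AddCircle.volume_closedBall]

end Torus

lemma tdist_eq_dist_toTorus {d : ℕ} (x y : Fin d → ℝ) :
    tdist d x y = dist (toTorus x) (toTorus y) := by
  refine le_antisymm ?_ (le_ciInf fun k => dist_toTorus_le_norm x y k)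
  have hbdd : BddBelow (range fun k : Fin d → ℤ => ‖(x + fun i => (k i : ℝ)) - y‖) :=
    ⟨0, by rintro _ ⟨k, rfl⟩; exact norm_nonneg _⟩
  refine (ciInf_le hbdd fun i => round (y i - x i)).trans ?_
  refine (pi_norm_le_iff_of_nonneg dist_nonneg).2 fun i => ?_
  calc ‖x i + round (y i - x i) - y i‖ = ‖(toTorus y i - toTorus x i : UnitAddCircle)‖ := by
        rw [toTorus, toTorus, ← AddCircle.coe_sub, UnitAddCircle.norm_eq, Real.norm_eq_abs,
          ← abs_neg]
        ring_nf
    _ ≤ dist (toTorus x) (toTorus y) := by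
        rw [← dist_eq_norm, dist_comm]; exact dist_le_pi_dist _ _ i

lemma Continuous.tdist {α : Type*} [TopologicalSpace α] {d : ℕ} {f g : α → Fin d → ℝ}
    (hf : Continuous f) (hg : Continuous g) : Continuous fun a => tdist d (f a) (g a) := by
  simp_rw [tdist_eq_dist_toTorus]
  exact (continuous_toTorus.comp hf).dist (continuous_toTorus.comp hg)

instance isProbabilityMeasure_cubeMeasure (d : ℕ) : IsProbabilityMeasure (cubeMeasure d) :=
  ⟨by simp [cubeMeasure, unitCube, Real.volume_Icc_pi]⟩

lemma cubeMeasure_real_lt_tdist {d : ℕ} (x : Fin d → ℝ) {t : ℝ} (ht : 0 ≤ t) :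
    (cubeMeasure d).real {y | t < tdist d x y} = 1 - min 1 (2 * t) ^ d := by
  have hset : {y | t < tdist d x y} = (toTorus ⁻¹' Metric.closedBall (toTorus x) t)ᶜ := by
    ext y; simp [tdist_eq_dist_toTorus, dist_comm]
  have hmp : MeasurePreserving toTorus (cubeMeasure d) volume := measurePreserving_toTorus
  rw [hset, probReal_compl_eq_one_sub (hmp.measurable measurableSet_closedBall),
    hmp.measureReal_preimage measurableSet_closedBall.nullMeasurableSet, measureReal_def,
    volume_closedBall_pi_unitAddCircle _ ht, Fintype.card_fin, ENNReal.toReal_pow,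
    ENNReal.toReal_ofReal (le_min zero_le_one (by positivity))]

lemma integral_infDist_rpow_eq_integral_tail {d n : ℕ} [NeZero n] {q : ℝ} (hq : 0 < q) :
    ∫ ω : Fin n → Fin d → ℝ, ∫ x in unitCube d, (⨅ i, tdist d x (ω i)) ^ q ∂volume
      ∂(Measure.pi fun _ : Fin n => cubeMeasure d) =
      ∫ s in Ioi (0 : ℝ), (1 - min 1 (2 * s ^ q⁻¹) ^ d) ^ n := by
  have hY0 : ∀ x (ω : Fin n → Fin d → ℝ), 0 ≤ ⨅ i, tdist d x (ω i) := fun x ω =>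
    Real.iInf_nonneg fun i => (tdist_eq_dist_toTorus x (ω i)).symm ▸ dist_nonneg
  have hY1 : ∀ x (ω : Fin n → Fin d → ℝ), ⨅ i, tdist d x (ω i) ≤ 1 := fun x ω =>
    ciInf_le_of_le (finite_range _).bddBelow 0 <| by
      rw [tdist_eq_dist_toTorus]; linarith [dist_toTorus_le_half x (ω 0)]
  have hY : Measurable fun p : (Fin d → ℝ) × (Fin n → Fin d → ℝ) =>
      ⨅ i, tdist d p.1 (p.2 i) :=
    Measurable.iInf fun i =>
      (continuous_fst.tdist ((continuous_apply i).comp continuous_snd)).measurable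
  change ∫ ω, ∫ x, (⨅ i, tdist d x (ω i)) ^ q ∂cubeMeasure d
    ∂(Measure.pi fun _ : Fin n => cubeMeasure d) = _
  refine integral_integral_eq_integral_tail (hY.pow_const q)
    (fun x ω => Real.rpow_nonneg (hY0 x ω) q)
    (fun x ω => Real.rpow_le_one (hY0 x ω) (hY1 x ω) hq.le) fun x t ht => ?_
  have hset : {ω : Fin n → Fin d → ℝ | t < (⨅ i, tdist d x (ω i)) ^ q} =
      {ω | t ^ q⁻¹ < ⨅ i, tdist d x (ω i)} := by
    ext ω; exact (Real.rpow_inv_lt_iff_of_pos (le_of_lt ht) (hY0 x ω) hq).symm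
  rw [hset, measureReal_pi_lt_iInf,
    cubeMeasure_real_lt_tdist x (Real.rpow_nonneg (le_of_lt ht) _), Fintype.card_fin]

lemma rpow_mul_integral_infDist_rpow_eq_GammaSeq {d n : ℕ} (hd : 0 < d) [NeZero n] {q : ℝ}
    (hq : 0 < q) :
    (n : ℝ) ^ (1 / (d : ℝ)) *
        (∫ ω : Fin n → Fin d → ℝ, ∫ x in unitCube d, (⨅ i, tdist d x (ω i)) ^ q ∂volume
          ∂(Measure.pi fun _ : Fin n => cubeMeasure d)) ^ (1 / q) =
      (2 ^ (-q) * (q / d) * Real.GammaSeq (q / d) n) ^ (1 / q) := by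
  have ha : 0 < q / d := div_pos hq (Nat.cast_pos.2 hd)
  have hI : 0 ≤ ∫ x in (0 : ℝ)..1, x ^ (q / d - 1) * (1 - x) ^ n :=
    intervalIntegral.integral_nonneg zero_le_one fun x hx =>
      mul_nonneg (Real.rpow_nonneg hx.1 _) (pow_nonneg (by linarith [hx.2]) n)
  rw [integral_infDist_rpow_eq_integral_tail hq, integral_tail_eq_beta hd.ne' (NeZero.ne n) hq,
    Real.GammaSeq_eq_rpow_mul_integral ha, mul_left_comm (2 ^ (-q) * (q / d)),
    Real.mul_rpow (x := (n : ℝ) ^ (q / d)) (by positivity) (by positivity),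
    ← Real.rpow_mul n.cast_nonneg]
  congr 2
  field_simp

theorem stmt13 (d : ℕ) (hd : 0 < d) (q : ℝ) (hq : 1 ≤ q) :
    Filter.Tendsto
      (fun n : ℕ => (n : ℝ) ^ (1 / (d : ℝ)) *
        (∫ ω : Fin n → Fin d → ℝ,
            ∫ x in unitCube d, (⨅ i, tdist d x (ω i)) ^ q
            ∂volume ∂(Measure.pi fun _ : Fin n => cubeMeasure d)) ^ (1/q))
      Filter.atTop
      (nhds ((1/2) * Real.Gamma (q / d + 1) ^ (1/q))) := by
  have hq0 : 0 < q := by linarith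
  have ha : 0 < q / d := div_pos hq0 (Nat.cast_pos.2 hd)
  have hlim : Tendsto (fun n => (2 ^ (-q) * (q / d) * Real.GammaSeq (q / d) n) ^ (1 / q)) atTop
      (𝓝 ((2 ^ (-q) * (q / d) * Real.Gamma (q / d)) ^ (1 / q))) :=
    ((Real.GammaSeq_tendsto_Gamma _).const_mul _).rpow_const (Or.inr (by positivity))
  have hval : (2 ^ (-q) * (q / d) * Real.Gamma (q / d)) ^ (1 / q) =
      1 / 2 * Real.Gamma (q / d + 1) ^ (1 / q) := by
    rw [mul_assoc, ← Real.Gamma_add_one ha.ne',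
      Real.mul_rpow (by positivity) (Real.Gamma_pos_of_pos (by positivity)).le,
      ← Real.rpow_mul two_pos.le, neg_mul, mul_one_div_cancel hq0.ne', Real.rpow_neg_one,
      one_div, one_div]
  rw [← hval]
  refine hlim.congr' ?_
  filter_upwards [eventually_ne_atTop 0] with n hn
  have : NeZero n := ⟨hn⟩
  exact (rpow_mul_integral_infDist_rpow_eq_GammaSeq hd hq0).symm
end

section
/- Let d ≥ 1. Let X_1,…,X_n be independent random points uniformly distributed in [0,1]^d and P_n = {X_1,…,X_n}. Define m₁ = min{ m ∈ ℕ : m^d (H_{m^d} − 2) ≥ n } and m₂ = max{ m ∈ ℕ : 2 m^d log(m^d) ≤ n }, where H_ℓ = Σ_{k=1}^ℓ 1/k. Then 1/(4 m₁) ≤ E[ sup_{x ∈ [0,1]^d} dist(x, P_n) ] ≤ 2/m₂. -/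
open MeasureTheory Set
open scoped ENNReal

/-!
Cut `[0,1]^d` into `m^d` open cells of side `1/m`. If every cell contains a sample point, every
`x` of the cube is within torus distance `1/m` of the sample; if some cell is empty, its centre is
at distance at least `1/(2m)` from all sample points. A given cell is missed with probability
`(1 - m⁻ᵈ)ⁿ`.

Upper bound: the union bound and `dist ≤ 1/2` give `E ≤ 1/m + mᵈ (1 - m⁻ᵈ)ⁿ / 2`, and
`2 mᵈ log mᵈ ≤ n` makes the second term at most `1/(2m)`.

Lower bound: by the second moment method (Cauchy–Schwarz for the number `N` of empty cells,
`(E N)² ≤ P(N > 0) E N²`, using that two distinct cells are both missed with probability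
`(1 - 2m⁻ᵈ)ⁿ ≤ (1 - m⁻ᵈ)²ⁿ`), some cell is empty with probability at least `1/2` as soon as
`mᵈ (1 - m⁻ᵈ)ⁿ ≥ 1`; this follows from `n ≤ mᵈ (H_{mᵈ} - 2)` and `H_ℓ ≤ 1 + log ℓ`.
-/

section TorusDistance

variable {d : ℕ}

lemma tdist_le_norm_add_sub (x y : Fin d → ℝ) (k : Fin d → ℤ) :
    tdist d x y ≤ ‖(x + fun i => (k i : ℝ)) - y‖ :=
  ciInf_le ⟨0, by rintro _ ⟨k, rfl⟩; exact norm_nonneg _⟩ k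

lemma le_tdist {x y : Fin d → ℝ} {r : ℝ}
    (h : ∀ k : Fin d → ℤ, r ≤ ‖(x + fun i => (k i : ℝ)) - y‖) : r ≤ tdist d x y :=
  le_ciInf h

lemma tdist_nonneg (x y : Fin d → ℝ) : 0 ≤ tdist d x y :=
  le_tdist fun _ => norm_nonneg _

lemma tdist_le_norm_sub (x y : Fin d → ℝ) : tdist d x y ≤ ‖x - y‖ := by
  simpa [← Pi.zero_def] using tdist_le_norm_add_sub x y 0

lemma tdist_le_half (x y : Fin d → ℝ) : tdist d x y ≤ 1 / 2 := by
  refine (tdist_le_norm_add_sub x y fun i => round (y i - x i)).trans ?_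
  refine (pi_norm_le_iff_of_nonneg (by norm_num)).2 fun i => ?_
  have := abs_sub_round (y i - x i)
  rw [abs_sub_comm] at this
  simpa [add_sub_assoc', add_comm, sub_sub_eq_add_sub] using this

lemma le_tdist_of_abs_sub {x y : Fin d → ℝ} {r : ℝ} (i : Fin d)
    (h₁ : r ≤ |x i - y i|) (h₂ : |x i - y i| ≤ 1 - r) : r ≤ tdist d x y := by
  refine le_tdist fun k => le_trans ?_ (norm_le_pi_norm _ i)
  simp only [Pi.sub_apply, Pi.add_apply, Real.norm_eq_abs]
  rcases eq_or_ne (k i) 0 with hk | hk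
  · simpa [hk] using h₁
  · have hk₁ : (1 : ℝ) ≤ |(k i : ℝ)| := by exact_mod_cast Int.one_le_abs hk
    have := abs_sub_le (x i + k i) (y i) (x i)
    rw [add_sub_cancel_left, abs_sub_comm (y i)] at this
    linarith

lemma tdist_le_tdist_add_norm_sub (x y y' : Fin d → ℝ) :
    tdist d x y ≤ tdist d x y' + ‖y - y'‖ := by
  rw [← sub_le_iff_le_add]
  refine le_tdist fun k => sub_le_iff_le_add.2 ?_
  calc tdist d x y ≤ ‖(x + fun i => (k i : ℝ)) - y‖ := tdist_le_norm_add_sub x y k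
    _ ≤ ‖(x + fun i => (k i : ℝ)) - y'‖ + ‖y' - y‖ := norm_sub_le_norm_sub_add_norm_sub _ _ _
    _ = _ := by rw [norm_sub_rev y']

end TorusDistance

section Grid

variable {d m : ℕ}

lemma Fin.cast_add_one_div_le_one (a : Fin m) : ((a : ℝ) + 1) / m ≤ 1 :=
  div_le_one_of_le₀ (by norm_cast; exact a.is_lt) m.cast_nonneg

lemma Fin.cast_add_one_div_le_div {a b : Fin m} (h : a < b) : ((a : ℝ) + 1) / m ≤ b / m :=
  div_le_div_of_nonneg_right (by norm_cast) m.cast_nonneg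

lemma exists_fin_div_le_le_add_one_div (hm : 0 < m) {t : ℝ} (h₀ : 0 ≤ t) (h₁ : t ≤ 1) :
    ∃ a : Fin m, (a : ℝ) / m ≤ t ∧ t ≤ ((a : ℝ) + 1) / m := by
  have hm' : (0 : ℝ) < m := by exact_mod_cast hm
  rcases h₁.lt_or_eq with h₁ | rfl
  · have hlt : ⌊m * t⌋₊ < m := (Nat.floor_lt (by positivity)).2 (mul_lt_of_lt_one_right hm' h₁)
    refine ⟨⟨⌊m * t⌋₊, hlt⟩, ?_, ?_⟩
    · exact (div_le_iff₀ hm').2 <| by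
        simpa [mul_comm] using Nat.floor_le (by positivity : 0 ≤ m * t)
    · exact (le_div_iff₀ hm').2 <| by
        simpa [mul_comm] using (Nat.lt_floor_add_one (m * t)).le
  · refine ⟨⟨m - 1, by omega⟩, ?_, ?_⟩
    · exact div_le_one_of_le₀ (by simp) m.cast_nonneg
    · rw [le_div_iff₀ hm', Nat.cast_pred hm]
      simp

/-- Cells are open so that distinct cells are disjoint; a point on the boundary of a cell is still
at distance `1 / (2m)` from its centre. -/
def gridCell (d m : ℕ) (j : Fin d → Fin m) : Set (Fin d → ℝ) :=
  univ.pi fun i => Ioo ((j i : ℝ) / m) (((j i : ℝ) + 1) / m)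

noncomputable def gridCenter (d m : ℕ) (j : Fin d → Fin m) : Fin d → ℝ :=
  fun i => ((j i : ℝ) + 1 / 2) / m

lemma measurableSet_gridCell (j : Fin d → Fin m) : MeasurableSet (gridCell d m j) :=
  MeasurableSet.univ_pi fun _ => measurableSet_Ioo

lemma gridCell_subset_unitCube (j : Fin d → Fin m) : gridCell d m j ⊆ unitCube d :=
  fun _ hx => ⟨fun i => (by positivity : (0 : ℝ) ≤ (j i : ℝ) / m).trans (hx i trivial).1.le,
    fun i => (hx i trivial).2.le.trans (Fin.cast_add_one_div_le_one (j i))⟩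

lemma gridCenter_mem_unitCube (j : Fin d → Fin m) : gridCenter d m j ∈ unitCube d :=
  ⟨fun i => by simp only [gridCenter]; positivity,
    fun i => (Fin.cast_add_one_div_le_one (j i)).trans' <| by
      simp only [gridCenter]; gcongr; norm_num⟩

lemma disjoint_gridCell {j j' : Fin d → Fin m} (h : j ≠ j') :
    Disjoint (gridCell d m j) (gridCell d m j') := by
  obtain ⟨i, hi⟩ := Function.ne_iff.1 h
  refine Set.disjoint_left.2 fun x hx hx' => ?_
  have h₁ := hx i trivial
  have h₂ := hx' i trivial
  rcases lt_or_gt_of_ne hi with hlt | hlt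
  · linarith [h₁.2, h₂.1, Fin.cast_add_one_div_le_div hlt]
  · linarith [h₁.1, h₂.2, Fin.cast_add_one_div_le_div hlt]

lemma cubeMeasure_real_gridCell (j : Fin d → Fin m) :
    (cubeMeasure d).real (gridCell d m j) = ((m : ℝ) ^ d)⁻¹ := by
  rw [cubeMeasure, measureReal_restrict_apply (measurableSet_gridCell j),
    inter_eq_left.2 (gridCell_subset_unitCube j), measureReal_def, gridCell,
    Real.volume_pi_Ioo_toReal fun i => by gcongr; linarith]
  simp [add_div, Finset.prod_const]

lemma tdist_le_of_mem_gridCell {j : Fin d → Fin m} {x y : Fin d → ℝ}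
    (hx : ∀ i, (j i : ℝ) / m ≤ x i ∧ x i ≤ ((j i : ℝ) + 1) / m) (hy : y ∈ gridCell d m j) :
    tdist d x y ≤ 1 / m := by
  refine (tdist_le_norm_sub x y).trans <| (pi_norm_le_iff_of_nonneg (by positivity)).2 fun i => ?_
  obtain ⟨hx₁, hx₂⟩ := hx i
  obtain ⟨hy₁, hy₂⟩ := hy i trivial
  rw [add_div] at hx₂ hy₂
  rw [Pi.sub_apply, Real.norm_eq_abs, abs_le]
  constructor <;> linarith

lemma one_div_two_mul_le_tdist_gridCenter {j : Fin d → Fin m} {y : Fin d → ℝ}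
    (hy : y ∈ unitCube d) (hyj : y ∉ gridCell d m j) :
    1 / (2 * m) ≤ tdist d (gridCenter d m j) y := by
  simp only [gridCell, mem_univ_pi, mem_Ioo, not_forall, not_and_or, not_lt] at hyj
  obtain ⟨i, hi⟩ := hyj
  have hm : (0 : ℝ) < m := by exact_mod_cast (j i).pos
  have hc : gridCenter d m j i = (j i : ℝ) / m + 1 / (2 * m) := by
    rw [gridCenter, add_div, div_div]
  have h₀ : (0 : ℝ) ≤ (j i : ℝ) / m := by positivity
  have h₁ : ((j i : ℝ) + 1) / m = (j i : ℝ) / m + 1 / (2 * m) + 1 / (2 * m) := by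
    field_simp; ring
  have h₂ := Fin.cast_add_one_div_le_one (j i)
  have hy₀ : 0 ≤ y i := hy.1 i
  have hy₁ : y i ≤ 1 := hy.2 i
  refine le_tdist_of_abs_sub i ?_ ?_
  · rw [hc, le_abs]
    rcases hi with hi | hi
    · exact Or.inl (by linarith)
    · exact Or.inr (by linarith)
  · rw [hc, abs_le]
    constructor <;> linarith

end Grid

section CoveringRadius

variable {d n : ℕ}

noncomputable def coveringRadius (d n : ℕ) (ω : Fin n → Fin d → ℝ) : ℝ :=
  ⨆ x : unitCube d, ⨅ i, tdist d ↑x (ω i)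

instance : Nonempty (unitCube d) := ⟨⟨0, le_rfl, zero_le_one⟩⟩

lemma iInf_tdist_le (x : Fin d → ℝ) (ω : Fin n → Fin d → ℝ) (i : Fin n) :
    ⨅ i, tdist d x (ω i) ≤ tdist d x (ω i) :=
  ciInf_le ⟨0, by rintro _ ⟨i, rfl⟩; exact tdist_nonneg _ _⟩ i

lemma coveringRadius_le_of_forall_exists_mem_gridCell {m : ℕ} (hm : 0 < m)
    {ω : Fin n → Fin d → ℝ} (h : ∀ j : Fin d → Fin m, ∃ i, ω i ∈ gridCell d m j) :
    coveringRadius d n ω ≤ 1 / m := by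
  refine ciSup_le fun x => ?_
  choose j hj using fun i => exists_fin_div_le_le_add_one_div hm (x.2.1 i) (x.2.2 i)
  obtain ⟨i, hi⟩ := h j
  exact (iInf_tdist_le _ ω i).trans (tdist_le_of_mem_gridCell hj hi)

variable [NeZero n]

lemma iInf_tdist_le_half (x : Fin d → ℝ) (ω : Fin n → Fin d → ℝ) :
    ⨅ i, tdist d x (ω i) ≤ 1 / 2 :=
  (iInf_tdist_le x ω 0).trans (tdist_le_half _ _)

lemma le_coveringRadius (ω : Fin n → Fin d → ℝ) (x : unitCube d) :
    ⨅ i, tdist d ↑x (ω i) ≤ coveringRadius d n ω :=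
  le_ciSup (f := fun x : unitCube d => ⨅ i, tdist d ↑x (ω i))
    ⟨1 / 2, by rintro _ ⟨x, rfl⟩; exact iInf_tdist_le_half _ ω⟩ x

lemma coveringRadius_le_half (ω : Fin n → Fin d → ℝ) : coveringRadius d n ω ≤ 1 / 2 :=
  ciSup_le fun _ => iInf_tdist_le_half _ ω

lemma coveringRadius_nonneg (ω : Fin n → Fin d → ℝ) : 0 ≤ coveringRadius d n ω :=
  (le_ciInf fun _ => tdist_nonneg _ _).trans (le_coveringRadius ω (Classical.arbitrary _))

lemma lipschitzWith_coveringRadius : LipschitzWith 1 (coveringRadius d n) := by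
  refine LipschitzWith.of_le_add fun ω ω' => ciSup_le fun x => ?_
  refine le_trans ?_ (add_le_add_left (le_coveringRadius ω' x) _)
  rw [← sub_le_iff_le_add]
  refine le_ciInf fun i => sub_le_iff_le_add.2 ?_
  calc ⨅ i, tdist d ↑x (ω i) ≤ tdist d ↑x (ω i) := iInf_tdist_le _ ω i
    _ ≤ tdist d ↑x (ω' i) + dist (ω i) (ω' i) := by
      rw [dist_eq_norm]; exact tdist_le_tdist_add_norm_sub _ _ _
    _ ≤ tdist d ↑x (ω' i) + dist ω ω' := by gcongr; exact dist_le_pi_dist ω ω' i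

lemma one_div_two_mul_le_coveringRadius {m : ℕ} {ω : Fin n → Fin d → ℝ}
    (hω : ∀ i, ω i ∈ unitCube d) {j : Fin d → Fin m} (hj : ∀ i, ω i ∉ gridCell d m j) :
    1 / (2 * m) ≤ coveringRadius d n ω :=
  (le_ciInf fun i => one_div_two_mul_le_tdist_gridCenter (hω i) (hj i)).trans
    (le_coveringRadius ω ⟨gridCenter d m j, gridCenter_mem_unitCube j⟩)

end CoveringRadius

section SecondMoment

variable {α : Type*} [MeasurableSpace α] {μ : Measure α} [IsFiniteMeasure μ]

-- Cauchy–Schwarz, through the discriminant of the nonnegative quadratic `t ↦ ∫ (f - t 𝟙_s)²`.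
lemma sq_integral_le_measureReal_mul_integral_sq {f : α → ℝ} {s : Set α} (hs : MeasurableSet s)
    (hf : Integrable f μ) (hf₂ : Integrable (fun a => f a ^ 2) μ) (hfs : ∀ a ∉ s, f a = 0) :
    (∫ a, f a ∂μ) ^ 2 ≤ μ.real s * ∫ a, f a ^ 2 ∂μ := by
  have hquad : ∀ t : ℝ, 0 ≤ μ.real s * (t * t) + (-2 * ∫ a, f a ∂μ) * t + ∫ a, f a ^ 2 ∂μ := by
    intro t
    have hexpand : ∀ a, (f a - s.indicator (fun _ => t) a) ^ 2
        = (f a ^ 2 + (-2 * t) * f a) + s.indicator (fun _ => t * t) a := by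
      intro a
      by_cases ha : a ∈ s
      · simp only [indicator_of_mem ha]; ring
      · simp only [indicator_of_notMem ha, hfs a ha]; ring
    calc 0 ≤ ∫ a, (f a - s.indicator (fun _ => t) a) ^ 2 ∂μ := integral_nonneg fun _ => sq_nonneg _
      _ = _ := by
        have hint : Integrable (fun a => f a ^ 2 + (-2 * t) * f a) μ := hf₂.add (hf.const_mul _)
        simp_rw [hexpand]
        rw [integral_add hint ((integrable_const _).indicator hs),
          integral_add hf₂ (hf.const_mul _), integral_const_mul, integral_indicator_const _ hs,
          smul_eq_mul]
        ring
  have := discrim_le_zero hquad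
  rw [discrim] at this
  linarith

lemma sq_sum_measureReal_le {ι : Type*} [Fintype ι] {A : ι → Set α}
    (hA : ∀ j, MeasurableSet (A j)) :
    (∑ j, μ.real (A j)) ^ 2 ≤ μ.real (⋃ j, A j) * ∑ j, ∑ j', μ.real (A j ∩ A j') := by
  set N : α → ℝ := fun a => ∑ j, (A j).indicator 1 a
  have hN₂ : (fun a => N a ^ 2) = fun a => ∑ j, ∑ j', (A j ∩ A j').indicator 1 a := by
    ext a
    simp only [N, sq, Finset.sum_mul_sum, inter_indicator_one, Pi.mul_apply]
  have hint : ∀ j, Integrable ((A j).indicator 1) μ :=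
    fun j => (integrable_const (1 : ℝ)).indicator (hA j)
  have hint₂ : ∀ j j', Integrable ((A j ∩ A j').indicator 1) μ :=
    fun j j' => (integrable_const (1 : ℝ)).indicator ((hA j).inter (hA j'))
  have hN : ∫ a, N a ∂μ = ∑ j, μ.real (A j) := by
    rw [integral_finsetSum _ fun j _ => hint j]
    simp only [integral_indicator_one (hA _)]
  have hNsq : ∫ a, N a ^ 2 ∂μ = ∑ j, ∑ j', μ.real (A j ∩ A j') := by
    rw [hN₂, integral_finsetSum _ fun j _ => integrable_finsetSum _ fun j' _ => hint₂ j j']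
    refine Finset.sum_congr rfl fun j _ => ?_
    rw [integral_finsetSum _ fun j' _ => hint₂ j j']
    simp only [integral_indicator_one ((hA _).inter (hA _))]
  have hsupp : ∀ a ∉ ⋃ j, A j, N a = 0 := fun a ha =>
    Finset.sum_eq_zero fun j _ => indicator_of_notMem (fun h => ha (mem_iUnion.2 ⟨j, h⟩)) _
  rw [← hN, ← hNsq]
  exact sq_integral_le_measureReal_mul_integral_sq (MeasurableSet.iUnion hA)
    (integrable_finsetSum _ fun j _ => hint j)
    (hN₂ ▸ integrable_finsetSum _ fun j _ => integrable_finsetSum _ fun j' _ => hint₂ j j') hsupp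

end SecondMoment

section Sampling

instance (d : ℕ) : IsProbabilityMeasure (cubeMeasure d) :=
  ⟨by simp [cubeMeasure, unitCube, Real.volume_Icc_pi]⟩

lemma measureReal_pi_univ_pi_const {ι β : Type*} [Fintype ι] [MeasurableSpace β] (μ : Measure β)
    [SigmaFinite μ] (s : Set β) :
    (Measure.pi fun _ : ι => μ).real (univ.pi fun _ => s) = μ.real s ^ Fintype.card ι := by
  simp [measureReal_def, Measure.pi_pi]

variable {d n m : ℕ}

local notation "𝐏" => Measure.pi fun _ : Fin n => cubeMeasure d

lemma ae_forall_mem_unitCube : ∀ᵐ ω ∂𝐏, ∀ i, ω i ∈ unitCube d :=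
  ae_all_iff.2 fun _ => Measure.tendsto_eval_ae_ae.eventually (ae_restrict_mem measurableSet_Icc)

lemma integrable_coveringRadius [NeZero n] : Integrable (coveringRadius d n) 𝐏 :=
  .of_bound lipschitzWith_coveringRadius.continuous.aestronglyMeasurable (1 / 2) <|
    .of_forall fun ω => by
      rw [Real.norm_of_nonneg (coveringRadius_nonneg ω)]
      exact coveringRadius_le_half ω

def cellMissed (d n m : ℕ) (j : Fin d → Fin m) : Set (Fin n → Fin d → ℝ) :=
  univ.pi fun _ => (gridCell d m j)ᶜ

lemma measurableSet_cellMissed (j : Fin d → Fin m) : MeasurableSet (cellMissed d n m j) :=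
  MeasurableSet.univ_pi fun _ => (measurableSet_gridCell j).compl

lemma measureReal_cellMissed (j : Fin d → Fin m) :
    𝐏.real (cellMissed d n m j) = (1 - ((m : ℝ) ^ d)⁻¹) ^ n := by
  rw [cellMissed, measureReal_pi_univ_pi_const,
    probReal_compl_eq_one_sub (measurableSet_gridCell j), cubeMeasure_real_gridCell,
    Fintype.card_fin]

lemma measureReal_cellMissed_inter {j j' : Fin d → Fin m} (h : j ≠ j') :
    𝐏.real (cellMissed d n m j ∩ cellMissed d n m j') = (1 - 2 * ((m : ℝ) ^ d)⁻¹) ^ n := by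
  rw [cellMissed, cellMissed, ← pi_inter_distrib, ← compl_union, measureReal_pi_univ_pi_const,
    probReal_compl_eq_one_sub ((measurableSet_gridCell j).union (measurableSet_gridCell j')),
    measureReal_union (disjoint_gridCell h) (measurableSet_gridCell j'), cubeMeasure_real_gridCell,
    cubeMeasure_real_gridCell, Fintype.card_fin, two_mul]

lemma measureReal_iUnion_cellMissed_le :
    𝐏.real (⋃ j : Fin d → Fin m, cellMissed d n m j) ≤ (m : ℝ) ^ d * (1 - ((m : ℝ) ^ d)⁻¹) ^ n :=
  (measureReal_iUnion_fintype_le _).trans_eq <| by simp [measureReal_cellMissed]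

lemma measureReal_cellMissed_inter_le_sq {j j' : Fin d → Fin m} (h : j ≠ j') :
    𝐏.real (cellMissed d n m j ∩ cellMissed d n m j') ≤ ((1 - ((m : ℝ) ^ d)⁻¹) ^ n) ^ 2 := by
  have hcard : (2 : ℝ) ≤ (m : ℝ) ^ d := by
    have := Fintype.one_lt_card_iff.2 ⟨j, j', h⟩
    simp only [Fintype.card_fun, Fintype.card_fin] at this
    exact_mod_cast this
  have hinv : ((m : ℝ) ^ d)⁻¹ ≤ 1 / 2 := by
    rw [inv_le_comm₀ (by positivity) (by norm_num)]
    linarith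
  calc _ = (1 - 2 * ((m : ℝ) ^ d)⁻¹) ^ n := measureReal_cellMissed_inter h
    _ ≤ ((1 - ((m : ℝ) ^ d)⁻¹) ^ 2) ^ n :=
      pow_le_pow_left₀ (by linarith) (by nlinarith [sq_nonneg ((m : ℝ) ^ d)⁻¹]) n
    _ = _ := by rw [← pow_mul, mul_comm, pow_mul]

lemma half_le_measureReal_iUnion_cellMissed (h : 1 ≤ (m : ℝ) ^ d * (1 - ((m : ℝ) ^ d)⁻¹) ^ n) :
    1 / 2 ≤ 𝐏.real (⋃ j : Fin d → Fin m, cellMissed d n m j) := by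
  set p := (1 - ((m : ℝ) ^ d)⁻¹) ^ n
  set x := (m : ℝ) ^ d * p
  have hsum : ∑ j : Fin d → Fin m, 𝐏.real (cellMissed d n m j) = x := by
    simp [measureReal_cellMissed, x, p]
  have hpair : ∀ j j' : Fin d → Fin m,
      𝐏.real (cellMissed d n m j ∩ cellMissed d n m j') ≤ (if j = j' then p else 0) + p ^ 2 := by
    intro j j'
    split_ifs with hjj
    · rw [hjj, inter_self, measureReal_cellMissed]
      nlinarith
    · rw [zero_add]
      exact measureReal_cellMissed_inter_le_sq hjj
  have hdouble : ∑ j : Fin d → Fin m, ∑ j' : Fin d → Fin m,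
      𝐏.real (cellMissed d n m j ∩ cellMissed d n m j') ≤ x + x ^ 2 :=
    calc _ ≤ ∑ j : Fin d → Fin m, ∑ j' : Fin d → Fin m, ((if j = j' then p else 0) + p ^ 2) :=
          Finset.sum_le_sum fun j _ => Finset.sum_le_sum fun j' _ => hpair j j'
      _ = x + x ^ 2 := by simp [Finset.sum_add_distrib, x]; ring
  have hsm := sq_sum_measureReal_le (μ := 𝐏) (A := cellMissed d n m) measurableSet_cellMissed
  rw [hsum] at hsm
  nlinarith [measureReal_nonneg (μ := 𝐏) (s := ⋃ j : Fin d → Fin m, cellMissed d n m j)]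

variable [NeZero n]

lemma one_div_four_mul_le_integral_coveringRadius
    (h : 1 ≤ (m : ℝ) ^ d * (1 - ((m : ℝ) ^ d)⁻¹) ^ n) :
    1 / (4 * (m : ℝ)) ≤ ∫ ω, coveringRadius d n ω ∂𝐏 := by
  set U := ⋃ j : Fin d → Fin m, cellMissed d n m j
  have hU : MeasurableSet U := MeasurableSet.iUnion measurableSet_cellMissed
  have hpoint : U.indicator (fun _ => 1 / (2 * (m : ℝ))) ≤ᵐ[𝐏] coveringRadius d n := by
    filter_upwards [ae_forall_mem_unitCube] with ω hω
    by_cases hωU : ω ∈ U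
    · obtain ⟨j, hj⟩ := mem_iUnion.1 hωU
      rw [indicator_of_mem hωU]
      exact one_div_two_mul_le_coveringRadius hω fun i => hj i trivial
    · rw [indicator_of_notMem hωU]
      exact coveringRadius_nonneg ω
  calc 1 / (4 * (m : ℝ)) = 1 / 2 * (1 / (2 * (m : ℝ))) := by ring
    _ ≤ 𝐏.real U * (1 / (2 * (m : ℝ))) := by
      gcongr
      exact half_le_measureReal_iUnion_cellMissed h
    _ = ∫ ω, U.indicator (fun _ => 1 / (2 * (m : ℝ))) ω ∂𝐏 := by
      rw [integral_indicator_const _ hU, smul_eq_mul]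
    _ ≤ ∫ ω, coveringRadius d n ω ∂𝐏 :=
      integral_mono_ae ((integrable_const _).indicator hU) integrable_coveringRadius hpoint

lemma integral_coveringRadius_le (hm : 0 < m) :
    ∫ ω, coveringRadius d n ω ∂𝐏 ≤ 1 / m + (m : ℝ) ^ d * (1 - ((m : ℝ) ^ d)⁻¹) ^ n / 2 := by
  set B := ⋃ j : Fin d → Fin m, cellMissed d n m j
  have hB : MeasurableSet B := MeasurableSet.iUnion measurableSet_cellMissed
  have hpoint : ∀ ω, coveringRadius d n ω ≤ 1 / m + B.indicator (fun _ => 1 / 2) ω := by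
    intro ω
    by_cases hωB : ω ∈ B
    · rw [indicator_of_mem hωB]
      linarith [coveringRadius_le_half ω, (by positivity : (0 : ℝ) ≤ 1 / m)]
    · rw [indicator_of_notMem hωB, add_zero]
      refine coveringRadius_le_of_forall_exists_mem_gridCell hm fun j => ?_
      by_contra! hj
      exact hωB (mem_iUnion.2 ⟨j, fun i _ => hj i⟩)
  have hint : Integrable (B.indicator fun _ => (1 / 2 : ℝ)) 𝐏 := (integrable_const _).indicator hB
  calc ∫ ω, coveringRadius d n ω ∂𝐏 ≤ ∫ ω, (1 / (m : ℝ) + B.indicator (fun _ => 1 / 2) ω) ∂𝐏 :=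
        integral_mono integrable_coveringRadius ((integrable_const _).add hint) hpoint
    _ = 1 / (m : ℝ) + 𝐏.real B / 2 := by
      rw [integral_add (integrable_const _) hint, integral_const, integral_indicator_const _ hB]
      simp [div_eq_mul_inv]
    _ ≤ _ := by
      gcongr
      exact measureReal_iUnion_cellMissed_le

end Sampling

lemma one_le_mul_one_sub_inv_pow {ℓ n : ℕ} (hn : 0 < n)
    (h : (n : ℝ) ≤ ℓ * ((harmonic ℓ : ℝ) - 2)) : 1 ≤ (ℓ : ℝ) * (1 - (ℓ : ℝ)⁻¹) ^ n := by
  have hℓ : (2 : ℝ) ≤ ℓ := by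
    have hn' : (1 : ℝ) ≤ n := by exact_mod_cast hn
    by_contra! hℓ
    have : ℓ < 2 := by exact_mod_cast hℓ
    interval_cases ℓ <;> norm_num at h <;> linarith
  have hlog : Real.log ℓ ≤ ℓ := (Real.log_le_sub_one_of_pos (by linarith)).trans (by linarith)
  -- `H_ℓ ≤ 1 + log ℓ` turns the hypothesis into `n ≤ (ℓ - 1) log ℓ`
  have hn_le : (n : ℝ) ≤ (ℓ - 1) * Real.log ℓ := by
    nlinarith [mul_le_mul_of_nonneg_left (harmonic_le_one_add_log ℓ) (by linarith : (0 : ℝ) ≤ ℓ)]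
  have hq : 0 < 1 - (ℓ : ℝ)⁻¹ := by
    have : (ℓ : ℝ)⁻¹ < 1 := inv_lt_one_of_one_lt₀ (by linarith)
    linarith
  have hlog_q : -((ℓ : ℝ) - 1)⁻¹ ≤ Real.log (1 - (ℓ : ℝ)⁻¹) := by
    have : (ℓ : ℝ) - 1 ≠ 0 := by linarith
    convert Real.one_sub_inv_le_log_of_pos hq using 1
    field_simp
    ring
  have hinv : (ℓ : ℝ)⁻¹ ≤ (1 - (ℓ : ℝ)⁻¹) ^ n := by
    rw [← Real.log_le_log_iff (by positivity) (pow_pos hq n), Real.log_inv, Real.log_pow]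
    have : (n : ℝ) * ((ℓ : ℝ) - 1)⁻¹ ≤ Real.log ℓ := by
      rw [← div_eq_mul_inv, div_le_iff₀ (by linarith)]
      linarith
    nlinarith [mul_le_mul_of_nonneg_left hlog_q n.cast_nonneg]
  calc (1 : ℝ) = ℓ * (ℓ : ℝ)⁻¹ := (mul_inv_cancel₀ (by positivity)).symm
    _ ≤ _ := by gcongr

lemma mul_one_sub_inv_pow_le {x : ℝ} (hx : 1 ≤ x) {n : ℕ} (h : 2 * x * Real.log x ≤ n) :
    x * (1 - x⁻¹) ^ n ≤ x⁻¹ := by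
  have hx₀ : 0 < x := by linarith
  have hpow : (1 - x⁻¹) ^ n ≤ (x ^ 2)⁻¹ :=
    calc (1 - x⁻¹) ^ n ≤ Real.exp (-x⁻¹) ^ n :=
          pow_le_pow_left₀ (sub_nonneg.2 (inv_le_one_of_one_le₀ hx))
            (by linarith [Real.add_one_le_exp (-x⁻¹)]) n
      _ = Real.exp (-(n / x)) := by rw [← Real.exp_nat_mul]; ring_nf
      _ ≤ Real.exp (-(2 * Real.log x)) := by
          gcongr
          rw [le_div_iff₀ hx₀]
          linarith
      _ = (x ^ 2)⁻¹ := by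
          rw [Real.exp_neg, show (2 : ℝ) * Real.log x = (2 : ℕ) * Real.log x by norm_num,
            Real.exp_nat_mul, Real.exp_log hx₀]
  calc x * (1 - x⁻¹) ^ n ≤ x * (x ^ 2)⁻¹ := by gcongr
    _ = x⁻¹ := by field_simp

theorem stmt14 (d : ℕ) (hd : 0 < d) (n : ℕ) (hn : 0 < n) (m₁ m₂ : ℕ)
    (h₁ : IsLeast {m : ℕ | (n : ℝ) ≤ (m ^ d : ℕ) * (((harmonic (m ^ d) : ℚ) : ℝ) - 2)} m₁)
    (h₂ : IsGreatest {m : ℕ | 2 * ((m ^ d : ℕ) : ℝ) * Real.log ((m ^ d : ℕ) : ℝ) ≤ n} m₂) :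
    1 / (4 * (m₁ : ℝ))
        ≤ ∫ ω : Fin n → Fin d → ℝ,
            (⨆ x : unitCube d, ⨅ i, tdist d ↑x (ω i))
            ∂(Measure.pi fun _ : Fin n => cubeMeasure d) ∧
      (∫ ω : Fin n → Fin d → ℝ,
          (⨆ x : unitCube d, ⨅ i, tdist d ↑x (ω i))
          ∂(Measure.pi fun _ : Fin n => cubeMeasure d))
        ≤ 2 / (m₂ : ℝ) := by
  have : NeZero n := ⟨hn.ne'⟩
  have hm₂ : 0 < m₂ := h₂.2 (by simp)
  have hm₂' : (1 : ℝ) ≤ m₂ := by exact_mod_cast hm₂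
  have hmiss : (m₂ : ℝ) ^ d * (1 - ((m₂ : ℝ) ^ d)⁻¹) ^ n ≤ (m₂ : ℝ)⁻¹ :=
    (mul_one_sub_inv_pow_le (one_le_pow₀ hm₂') (by exact_mod_cast h₂.1)).trans
      (inv_anti₀ (by positivity) (le_self_pow₀ hm₂' hd.ne'))
  refine ⟨one_div_four_mul_le_integral_coveringRadius
    (by exact_mod_cast one_le_mul_one_sub_inv_pow hn h₁.1), ?_⟩
  calc _ ≤ 1 / (m₂ : ℝ) + (m₂ : ℝ) ^ d * (1 - ((m₂ : ℝ) ^ d)⁻¹) ^ n / 2 :=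
        integral_coveringRadius_le hm₂
    _ ≤ 2 / m₂ := by
      rw [one_div, div_eq_mul_inv (2 : ℝ)]
      linarith [inv_nonneg.2 (m₂.cast_nonneg (α := ℝ))]
end
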